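/- Let ρ : (0,b) → ℝ be differentiable with ρ' + ρ² ≥ -κ for a fixed κ ∈ ℝ, and suppose ρ(t) → ∞ as t → 0⁺. Then ct_κ(t) ≤ ρ(t) for all t ∈ (0, min(b, π_κ)). -/

import Mathlib

/-- The generalised sine function `sn_κ`. -/
noncomputable def snK (κ t : ℝ) : ℝ :=
  if 0 < κ then Real.sin (Real.sqrt κ * t) / Real.sqrt κ
  else if κ = 0 then t
  else Real.sinh (Real.sqrt (-κ) * t) / Real.sqrt (-κ)

/-- The derivative `sn_κ'` of the generalised sine function. -/
noncomputable def snK' (κ t : ℝ) : ℝ :=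
  if 0 < κ then Real.cos (Real.sqrt κ * t)
  else if κ = 0 then 1
  else Real.cosh (Real.sqrt (-κ) * t)

/-- The generalised cotangent `ct_κ = sn_κ' / sn_κ`. -/
noncomputable def ctK (κ t : ℝ) : ℝ := snK' κ t / snK κ t

/-! Shifting by `ε > 0` turns `ct_κ` into a solution `s ↦ ct_κ (s + ε)` of the same Riccati
equation that stays bounded at `0`; since `ρ → ∞` there, `ρ` lies above it near `0`, and the
comparison principle for `x' + x² + κ` keeps it above up to `t`. Letting `ε → 0` gives the claim.
The shift is needed because `ct_κ` itself also tends to `∞`, at a rate `ρ` need not match. -/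

open Set Filter Topology

lemma hasDerivAt_snK (κ t : ℝ) : HasDerivAt (snK κ) (snK' κ t) t := by
  unfold snK snK'
  rcases lt_trichotomy κ 0 with hκ | rfl | hκ
  · have hs : Real.sqrt (-κ) ≠ 0 := (Real.sqrt_pos.2 (neg_pos.2 hκ)).ne'
    simp only [if_neg hκ.not_gt, if_neg hκ.ne]
    refine ((((hasDerivAt_id' t).const_mul _).sinh).div_const _).congr_deriv ?_
    field_simp
  · simpa using hasDerivAt_id' t
  · have hs : Real.sqrt κ ≠ 0 := (Real.sqrt_pos.2 hκ).ne'
    simp only [if_pos hκ]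
    refine ((((hasDerivAt_id' t).const_mul _).sin).div_const _).congr_deriv ?_
    field_simp

lemma hasDerivAt_snK' (κ t : ℝ) : HasDerivAt (snK' κ) (-κ * snK κ t) t := by
  unfold snK snK'
  rcases lt_trichotomy κ 0 with hκ | rfl | hκ
  · have hs : Real.sqrt (-κ) ≠ 0 := (Real.sqrt_pos.2 (neg_pos.2 hκ)).ne'
    simp only [if_neg hκ.not_gt, if_neg hκ.ne]
    refine (((hasDerivAt_id' t).const_mul _).cosh).congr_deriv ?_
    field_simp
    rw [Real.sq_sqrt (neg_nonneg.2 hκ.le)]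
    ring
  · simpa using hasDerivAt_const t (1 : ℝ)
  · have hs : Real.sqrt κ ≠ 0 := (Real.sqrt_pos.2 hκ).ne'
    simp only [if_pos hκ]
    refine (((hasDerivAt_id' t).const_mul _).cos).congr_deriv ?_
    field_simp
    rw [Real.sq_sqrt hκ.le]
    ring

lemma snK_pos {κ t : ℝ} (ht : 0 < t) (hπ : 0 < κ → t < Real.pi / Real.sqrt κ) :
    0 < snK κ t := by
  unfold snK
  rcases lt_trichotomy κ 0 with hκ | rfl | hκ
  · simp only [if_neg hκ.not_gt, if_neg hκ.ne]
    have hs : 0 < Real.sqrt (-κ) := Real.sqrt_pos.2 (neg_pos.2 hκ)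
    exact div_pos (Real.sinh_pos_iff.2 (by positivity)) hs
  · simpa using ht
  · simp only [if_pos hκ]
    have hs : 0 < Real.sqrt κ := Real.sqrt_pos.2 hκ
    have hlt : Real.sqrt κ * t < Real.pi := by
      have := hπ hκ
      rwa [lt_div_iff₀ hs, mul_comm] at this
    exact div_pos (Real.sin_pos_of_pos_of_lt_pi (by positivity) hlt) hs

theorem hasDerivAt_ctK {κ t : ℝ} (h : snK κ t ≠ 0) :
    HasDerivAt (ctK κ) (-ctK κ t ^ 2 - κ) t := by
  refine ((hasDerivAt_snK' κ t).div (hasDerivAt_snK κ t) h).congr_deriv ?_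
  unfold ctK
  field_simp
  ring

theorem exists_hasDerivAt_of_continuousOn_Icc {E : Type*} [NormedAddCommGroup E]
    [NormedSpace ℝ E] [CompleteSpace E] {f : ℝ → E} {a c : ℝ} (hac : a ≤ c)
    (hf : ContinuousOn f (Icc a c)) : ∃ P : ℝ → E, ∀ s ∈ Icc a c, HasDerivAt P (f s) s := by
  have hg : Continuous fun s => f (projIcc a c hac s) :=
    hf.comp_continuous (continuous_subtype_val.comp continuous_projIcc) fun s => Subtype.prop _
  refine ⟨fun s => ∫ x in a..s, f (projIcc a c hac x), fun s hs => ?_⟩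
  simpa [projIcc_of_mem hac hs] using (hg.integral_hasStrictDerivAt a s).hasDerivAt

theorem riccati_comparison {u v u' v' : ℝ → ℝ} {a c : ℝ} (hac : a ≤ c)
    (hu : ContinuousOn u (Icc a c)) (hv : ContinuousOn v (Icc a c))
    (hu' : ∀ s ∈ Ioo a c, HasDerivAt u (u' s) s) (hv' : ∀ s ∈ Ioo a c, HasDerivAt v (v' s) s)
    (hineq : ∀ s ∈ Ioo a c, v' s + v s ^ 2 ≤ u' s + u s ^ 2) (ha : v a ≤ u a) :
    v c ≤ u c := by
  -- `(u - v)' ≥ -(u + v) (u - v)`, so `(u - v) e^P` is monotone for a primitive `P` of `u + v`.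
  obtain ⟨P, hP⟩ :=
    exists_hasDerivAt_of_continuousOn_Icc (f := fun s => u s + v s) hac (hu.add hv)
  have hmono : MonotoneOn (fun s => (u s - v s) * Real.exp (P s)) (Icc a c) := by
    refine monotoneOn_of_hasDerivWithinAt_nonneg (convex_Icc a c)
      (f' := fun s => (u' s + u s ^ 2 - (v' s + v s ^ 2)) * Real.exp (P s)) ?_ ?_ ?_
    · exact (hu.sub hv).mul fun s hs => (hP s hs).exp.continuousAt.continuousWithinAt
    · intro s hs
      rw [interior_Icc] at hs
      refine ((((hu' s hs).sub (hv' s hs)).mul (hP s (Ioo_subset_Icc_self hs)).exp).congr_deriv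
        ?_).hasDerivWithinAt
      simp only [Pi.sub_apply]
      ring
    · intro s hs
      rw [interior_Icc] at hs
      exact mul_nonneg (sub_nonneg.2 (hineq s hs)) (Real.exp_pos _).le
  have hc : 0 ≤ (u c - v c) * Real.exp (P c) :=
    (mul_nonneg (sub_nonneg.2 ha) (Real.exp_pos _).le).trans
      (hmono (left_mem_Icc.2 hac) (right_mem_Icc.2 hac) hac)
  exact sub_nonneg.1 (nonneg_of_mul_nonneg_left hc (Real.exp_pos _))

theorem ctK_add_le_of_riccati {κ b ε t : ℝ} {ρ ρ' : ℝ → ℝ}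
    (hderiv : ∀ s ∈ Ioo 0 b, HasDerivAt ρ (ρ' s) s)
    (hineq : ∀ s ∈ Ioo 0 b, -κ ≤ ρ' s + ρ s ^ 2)
    (hlim : Tendsto ρ (𝓝[>] 0) atTop) (hε : 0 < ε) (ht : t ∈ Ioo 0 b)
    (hπ : 0 < κ → t + ε < Real.pi / Real.sqrt κ) : ctK κ (t + ε) ≤ ρ t := by
  have hct : ∀ s ∈ Icc 0 t,
      HasDerivAt (fun s => ctK κ (s + ε)) (-ctK κ (s + ε) ^ 2 - κ) s := fun s hs =>
    HasDerivAt.comp_add_const s ε <| hasDerivAt_ctK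
      (snK_pos (by linarith [hs.1]) fun hκ => by linarith [hs.2, hπ hκ]).ne'
  obtain ⟨a, hρa, ha0, hat⟩ : ∃ a, ctK κ (a + ε) ≤ ρ a ∧ 0 < a ∧ a < t := by
    have hbdd : ∀ᶠ a in 𝓝[>] 0, ctK κ (a + ε) < ctK κ (0 + ε) + 1 :=
      ((hct 0 ⟨le_rfl, ht.1.le⟩).continuousAt.tendsto.mono_left
        nhdsWithin_le_nhds).eventually_lt_const (lt_add_one _)
    obtain ⟨a, hbdd, hbig, ha⟩ := (hbdd.and ((hlim.eventually_gt_atTop _).and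
      (Ioo_mem_nhdsGT ht.1))).exists
    exact ⟨a, (hbdd.trans hbig).le, ha⟩
  have hsub : Icc a t ⊆ Ioo 0 b := fun s hs => ⟨ha0.trans_le hs.1, hs.2.trans_lt ht.2⟩
  have hsub' : Icc a t ⊆ Icc 0 t := Icc_subset_Icc_left ha0.le
  refine riccati_comparison hat.le
    (fun s hs => (hderiv s (hsub hs)).continuousAt.continuousWithinAt)
    (fun s hs => (hct s (hsub' hs)).continuousAt.continuousWithinAt)
    (fun s hs => hderiv s (hsub (Ioo_subset_Icc_self hs)))
    (fun s hs => hct s (hsub' (Ioo_subset_Icc_self hs))) (fun s hs => ?_) hρa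
  linarith [hineq s (hsub (Ioo_subset_Icc_self hs))]

theorem riccati_comparison_lower_general (κ b : ℝ) (ρ ρ' : ℝ → ℝ)
    (hderiv : ∀ t ∈ Set.Ioo 0 b, HasDerivAt ρ (ρ' t) t)
    (hineq : ∀ t ∈ Set.Ioo 0 b, -κ ≤ ρ' t + (ρ t) ^ 2)
    (hlim : Filter.Tendsto ρ (nhdsWithin 0 (Set.Ioi 0)) Filter.atTop) :
    ∀ t ∈ Set.Ioo 0 b, (0 < κ → t < Real.pi / Real.sqrt κ) → ctK κ t ≤ ρ t := by
  intro t ht hπ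
  have hshift : Tendsto (fun ε => t + ε) (𝓝[>] 0) (𝓝 t) := by
    simpa using ((continuous_const_add t).tendsto 0).mono_left nhdsWithin_le_nhds
  have hct : Tendsto (fun ε => ctK κ (t + ε)) (𝓝[>] 0) (𝓝 (ctK κ t)) :=
    (hasDerivAt_ctK (snK_pos ht.1 hπ).ne').continuousAt.tendsto.comp hshift
  have hsmall : ∀ᶠ ε in 𝓝[>] 0, 0 < κ → t + ε < Real.pi / Real.sqrt κ := by
    by_cases hκ : 0 < κ
    · filter_upwards [hshift.eventually_lt_const (hπ hκ)] with ε h _ using h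
    · exact Eventually.of_forall fun _ h => absurd h hκ
  refine le_of_tendsto hct ?_
  filter_upwards [self_mem_nhdsWithin, hsmall] with ε hε hεπ
  exact ctK_add_le_of_riccati hderiv hineq hlim hε ht hεπ

/-- Riccati comparison estimate, second part: if `ρ' + ρ² ≥ -κ` on `(0, b)` and
`ρ t → ∞` as `t → 0⁺`, then `ct_κ ≤ ρ` on `(0, min b π_κ)`, where `π_κ = π / √κ`
for `κ > 0` and `π_κ = ∞` otherwise. -/
theorem riccati_comparison_lower (κ b : ℝ) (hb : 0 < b) (ρ ρ' : ℝ → ℝ)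
    (hderiv : ∀ t ∈ Set.Ioo 0 b, HasDerivAt ρ (ρ' t) t)
    (hineq : ∀ t ∈ Set.Ioo 0 b, -κ ≤ ρ' t + (ρ t) ^ 2)
    (hlim : Filter.Tendsto ρ (nhdsWithin 0 (Set.Ioi 0)) Filter.atTop) :
    ∀ t ∈ Set.Ioo 0 b, (0 < κ → t < Real.pi / Real.sqrt κ) → ctK κ t ≤ ρ t :=
  riccati_comparison_lower_general κ b ρ ρ' hderiv hineq hlim
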